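/- Let d ≥ 1, δ > 0, σ ≥ 0, m ≥ 1, and c ∈ ℝ (the bin width z^{k+1} − z^k). Let Ṽ be the hypercube design matrix, and for each n = 1,…,m let y_n = Ṽβ + ε_n, where β ∈ ℝ^d is fixed and the components of ε_1,…,ε_m (all 2^d·m of them) are jointly independent random variables with mean 0 and variance σ². Let β̂_{n} be the d-th coordinate of the OLS slope estimator 2^{2−d} δ^{−2} Ṽᵀ y_n, and define the A2D2E bin-increment estimator Δ̂_A2D2E = c · (1/m) Σ_{n=1}^m β̂_{n}. Then Var(Δ̂_A2D2E) = c² σ² / (m · 2^{d−2} δ²). -/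

import Mathlib

open Matrix MeasureTheory ProbabilityTheory

/-- The hypercube design matrix `Ṽ`: the `2^d × d` real matrix (rows indexed by sign patterns
`s : Fin d → Bool`) whose row `s` is the vector with `i`-th entry `(δ/2)·(±1)` according to
the sign pattern `s`. -/
noncomputable def designMatrix (d : ℕ) (δ : ℝ) : Matrix (Fin d → Bool) (Fin d) ℝ :=
  fun s i => (δ / 2) * (if s i then 1 else -1)

private lemma variance_const_add {Ω : Type*} [MeasurableSpace Ω] (μ : Measure Ω)
    [IsProbabilityMeasure μ] (k : ℝ) (X : Ω → ℝ) (hX : Integrable X μ) :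
    variance (fun ω => k + X ω) μ = variance X μ := by
  have h : μ[fun ω => k + X ω] = k + μ[X] := by
    rw [integral_add (integrable_const k) hX]; simp
  rw [variance, variance, evariance, evariance, h]
  simp_rw [add_sub_add_left_eq_sub]


/-- **Lemma 2.** With `m` independent OLS fits `y n = Ṽβ + ε n` on the hypercube
design (all `2^d·m` noise components jointly independent, centered, with variance `σ²`), the
A2D2E bin-increment estimator `Δ̂ = c · (1/m) Σ β̂ n` — where `β̂ n` is the `d`-th coordinate of
`2^(2−d) δ⁻² Ṽᵀ (y n)` and `c` is the bin width — has variance `c² σ² / (m · 2^(d−2) δ²)`. -/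
theorem a2d2e_increment_variance
    {Ω : Type*} [MeasurableSpace Ω] (μ : Measure Ω) [IsProbabilityMeasure μ]
    (d : ℕ) (hd : 1 ≤ d) (δ : ℝ) (hδ : 0 < δ) (σ : ℝ) (hσ : 0 ≤ σ)
    (m : ℕ) (hm : 1 ≤ m) (c : ℝ)
    (β : Fin d → ℝ) (ε : Fin m → (Fin d → Bool) → Ω → ℝ)
    (hmeas : ∀ n s, Measurable (ε n s))
    (hL2 : ∀ n s, MemLp (ε n s) 2 μ)
    (hindep : iIndepFun
        (fun p : Fin m × (Fin d → Bool) => ε p.1 p.2) μ)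
    (hmean : ∀ n s, μ[ε n s] = 0)
    (hvar : ∀ n s, variance (ε n s) μ = σ ^ 2)
    (y : Fin m → Ω → (Fin d → Bool) → ℝ)
    (hy : ∀ n ω s, y n ω s = (designMatrix d δ).mulVec β s + ε n s ω) :
    variance (fun ω =>
        c * ((1 / (m : ℝ)) * ∑ n : Fin m,
          (((2 : ℝ) ^ (2 - (d : ℤ)) * δ ^ (-2 : ℤ)) • (designMatrix d δ)ᵀ.mulVec (y n ω))
            ⟨d - 1, by omega⟩)) μ
      = c ^ 2 * σ ^ 2 / ((m : ℝ) * (2 : ℝ) ^ ((d : ℤ) - 2) * δ ^ 2) := by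
  set j : Fin d := ⟨d - 1, by omega⟩
  set A : ℝ := (2 : ℝ) ^ (2 - (d : ℤ)) * δ ^ (-2 : ℤ) with hA
  set b : Fin m × (Fin d → Bool) → ℝ :=
    fun p => c * (1 / (m : ℝ)) * A * designMatrix d δ p.2 j with hb
  set K : ℝ := ∑ p : Fin m × (Fin d → Bool), b p * (designMatrix d δ).mulVec β p.2 with hK
  have key : (fun ω =>
        c * ((1 / (m : ℝ)) * ∑ n : Fin m,
          (A • (designMatrix d δ)ᵀ.mulVec (y n ω)) j))
      = fun ω => K + ∑ p : Fin m × (Fin d → Bool), b p * ε p.1 p.2 ω := by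
    funext ω
    simp only [hK, Pi.smul_apply, smul_eq_mul, Matrix.mulVec, dotProduct,
      Matrix.transpose_apply, hy, Fintype.sum_prod_type, ← Finset.sum_add_distrib,
      Finset.mul_sum]
    refine Finset.sum_congr rfl fun n _ => ?_
    refine Finset.sum_congr rfl fun s _ => ?_
    rw [← Finset.mul_sum]
    simp only [hb]
    ring
  rw [key, variance_const_add μ K _ ?_]
  · have hXsum : (fun ω => ∑ p : Fin m × (Fin d → Bool), b p * ε p.1 p.2 ω)
        = ∑ p : Fin m × (Fin d → Bool), fun ω => b p * ε p.1 p.2 ω := by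
      funext ω; rw [Finset.sum_apply]
    have hpind : ∀ p q : Fin m × (Fin d → Bool), p ≠ q →
        IndepFun (fun ω => b p * ε p.1 p.2 ω) (fun ω => b q * ε q.1 q.2 ω) μ :=
      fun p q hpq => (hindep.indepFun hpq).comp
        (measurable_const_mul (b p)) (measurable_const_mul (b q))
    rw [hXsum, IndepFun.variance_sum
      (X := fun p => fun ω => b p * ε p.1 p.2 ω)
      (fun p _ => ((hL2 p.1 p.2).const_mul (b p)))
      (fun p _ q hq hpq => hpind p q hpq)]
    have hval : ∀ p : Fin m × (Fin d → Bool),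
        variance (fun ω => b p * ε p.1 p.2 ω) μ
          = (c * (1 / (m : ℝ)) * A * (δ / 2)) ^ 2 * σ ^ 2 := by
      intro p
      rw [variance_const_mul, hvar]
      have : (b p) ^ 2 = (c * (1 / (m : ℝ)) * A * (δ / 2)) ^ 2 := by
        simp only [hb, designMatrix]
        rcases Bool.eq_false_or_eq_true (p.2 j) with h | h <;> simp [h]
      rw [this]
    simp only [hval, Finset.sum_const, Finset.card_univ, Fintype.card_prod,
      Fintype.card_fin, Fintype.card_fun, Fintype.card_bool, nsmul_eq_mul]
    have hm0 : (m : ℝ) ≠ 0 := by positivity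
    have hδ0 : (δ : ℝ) ≠ 0 := ne_of_gt hδ
    have h2 : ((2 : ℝ) ^ (d : ℤ)) ≠ 0 := by positivity
    rw [hA]
    have hδ2 : (δ:ℝ) ^ (-2 : ℤ) = ((δ:ℝ) ^ (2:ℕ))⁻¹ := by
      rw [_root_.zpow_neg]; norm_cast
    rw [zpow_sub₀ (two_ne_zero), zpow_sub₀ (two_ne_zero), hδ2]
    push_cast
    rw [zpow_natCast]
    field_simp
  · exact integrable_finset_sum _ fun p _ =>
      (((hL2 p.1 p.2).integrable one_le_two).const_mul (b p))
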